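/- arXiv:1404.2537 — 2 statements merged into one kernel-verified Lean document; each statement's English description precedes it below -/
import Mathlib

section
/- The quantity d_{R1} := 2·L_{R1}·|Ψ_{R11} \ Ψ_{R12}| + 2·max(0, min(L_{R1}·|Ψ_{R11} ∩ Ψ_{R12}|, (L_{R1}·|Ψ_{R12}| − L_{T2}·|Ψ_{T12}|)⁺ + L_{T2}·|Ψ_{T12} \ Ψ_{T22}|)) satisfies the identity d_{R1} = min(2·L_{R1}·|Ψ_{R11}|, d_sum − 2·L_{T2}·|Ψ_{T22}|). -/
open MeasureTheory Set

/-- Real-valued Lebesgue measure of a set of reals. -/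
noncomputable def μr (S : Set ℝ) : ℝ := (volume S).toReal

/-!
Write `a, b` for the `L_R1`-weighted measures of `Ψ_R11 \ Ψ_R12` and `Ψ_R11 ∩ Ψ_R12`, and
`v, s, u` for the `L_T2`-weighted measures of `Ψ_T22 \ Ψ_T12`, `Ψ_T12 \ Ψ_T22` and
`Ψ_T12 ∩ Ψ_T22`. Splitting every measure along these pieces, `v` cancels and the right-hand side
becomes `2a + 2 min(b, max(t, r) - u)` with `t = s + u` and `r = L_R1 |Ψ_R12|`, while
`max(t, r) - u = (r - t)⁺ + s ≥ 0`, so the outer `max 0` in `d_R1` is inactive.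
-/

lemma μr_nonneg (S : Set ℝ) : 0 ≤ μr S := ENNReal.toReal_nonneg

lemma μr_sdiff_add_inter {A : Set ℝ} (B : Set ℝ) (hA : Bornology.IsBounded A)
    (hB : MeasurableSet B) : μr (A \ B) + μr (A ∩ B) = μr A :=
  measureReal_sdiff_add_inter hB hA.measure_lt_top.ne

lemma max_sub_add_eq_max_sub {r s t u : ℝ} (ht : t = s + u) :
    max (r - t) 0 + s = max t r - u := by
  rcases le_total t r with h | h
  · rw [max_eq_left (sub_nonneg.2 h), max_eq_right h, ht]; ring
  · rw [max_eq_right (sub_nonpos.2 h), max_eq_left h, ht]; ring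

lemma max_zero_min_max_sub_add {b r s t u : ℝ} (hb : 0 ≤ b) (hs : 0 ≤ s) (ht : t = s + u) :
    max 0 (min b (max (r - t) 0 + s)) = min b (max t r - u) := by
  have hnonneg : 0 ≤ min b (max (r - t) 0 + s) :=
    le_min hb (add_nonneg (le_max_right _ _) hs)
  rw [max_eq_right hnonneg, max_sub_add_eq_max_sub ht]

theorem dR1_identity_general
    (L_R1 L_T2 : ℝ)
    (hLR1 : 0 ≤ L_R1) (hLT2 : 0 ≤ L_T2)
    (ΨT12 ΨT22 ΨR11 ΨR12 : Set ℝ)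
    (hmT12 : MeasurableSet ΨT12)
    (hmT22 : MeasurableSet ΨT22)
    (hmR12 : MeasurableSet ΨR12)
    (hsT12 : ΨT12 ⊆ Icc (-1) 1)
    (hsT22 : ΨT22 ⊆ Icc (-1) 1) (hsR11 : ΨR11 ⊆ Icc (-1) 1)
    (dsum dR1 : ℝ)
    (hdsum : dsum = 2 * L_T2 * μr (ΨT22 \ ΨT12) + 2 * L_R1 * μr (ΨR11 \ ΨR12)
        + 2 * max (L_T2 * μr ΨT12) (L_R1 * μr ΨR12))
    (hdR1 : dR1 = 2 * L_R1 * μr (ΨR11 \ ΨR12)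
        + 2 * max 0 (min (L_R1 * μr (ΨR11 ∩ ΨR12))
            (max (L_R1 * μr ΨR12 - L_T2 * μr ΨT12) 0 + L_T2 * μr (ΨT12 \ ΨT22))))
    :
    dR1 = min (2 * L_R1 * μr ΨR11) (dsum - 2 * L_T2 * μr ΨT22) := by
  have hbdd : ∀ {A : Set ℝ}, A ⊆ Icc (-1) 1 → Bornology.IsBounded A :=
    fun h => (Metric.isBounded_Icc _ _).subset h
  have hT12 : L_T2 * μr ΨT12 = L_T2 * μr (ΨT12 \ ΨT22) + L_T2 * μr (ΨT12 ∩ ΨT22) := by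
    rw [← μr_sdiff_add_inter ΨT22 (hbdd hsT12) hmT22, mul_add]
  rw [hdR1, hdsum, max_zero_min_max_sub_add (mul_nonneg hLR1 (μr_nonneg _))
    (mul_nonneg hLT2 (μr_nonneg _)) hT12, ← μr_sdiff_add_inter ΨR12 (hbdd hsR11) hmR12,
    ← μr_sdiff_add_inter ΨT12 (hbdd hsT22) hmT12, inter_comm ΨT22,
    mul_min_of_nonneg _ _ zero_le_two, ← min_add_add_left]
  congr 1 <;> ring

theorem dR1_identity
    (L_T1 L_R1 L_T2 L_R2 : ℝ)
    (hLT1 : 0 ≤ L_T1) (hLR1 : 0 ≤ L_R1) (hLT2 : 0 ≤ L_T2) (hLR2 : 0 ≤ L_R2)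
    (ΨT11 ΨT12 ΨT22 ΨR11 ΨR12 ΨR22 : Set ℝ)
    (hmT11 : MeasurableSet ΨT11) (hmT12 : MeasurableSet ΨT12)
    (hmT22 : MeasurableSet ΨT22) (hmR11 : MeasurableSet ΨR11)
    (hmR12 : MeasurableSet ΨR12) (hmR22 : MeasurableSet ΨR22)
    (hsT11 : ΨT11 ⊆ Icc (-1) 1) (hsT12 : ΨT12 ⊆ Icc (-1) 1)
    (hsT22 : ΨT22 ⊆ Icc (-1) 1) (hsR11 : ΨR11 ⊆ Icc (-1) 1)
    (hsR12 : ΨR12 ⊆ Icc (-1) 1) (hsR22 : ΨR22 ⊆ Icc (-1) 1)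
    (dsum dR1 : ℝ)
    (hdsum : dsum = 2 * L_T2 * μr (ΨT22 \ ΨT12) + 2 * L_R1 * μr (ΨR11 \ ΨR12)
        + 2 * max (L_T2 * μr ΨT12) (L_R1 * μr ΨR12))
    (hdR1 : dR1 = 2 * L_R1 * μr (ΨR11 \ ΨR12)
        + 2 * max 0 (min (L_R1 * μr (ΨR11 ∩ ΨR12))
            (max (L_R1 * μr ΨR12 - L_T2 * μr ΨT12) 0 + L_T2 * μr (ΨT12 \ ΨT22))))
    :
    dR1 = min (2 * L_R1 * μr ΨR11) (dsum - 2 * L_T2 * μr ΨT22) :=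
  dR1_identity_general L_R1 L_T2 hLR1 hLT2 ΨT12 ΨT22 ΨR11 ΨR12 hmT12 hmT22 hmR12 hsT12 hsT22 hsR11
    dsum dR1 hdsum hdR1
end

section
/- The quantity δ_{R1} := 2·L_{R1}·|Ψ_{R11} \ Ψ_{R12}| + 2·min(L_{R1}·|Ψ_{R11} ∩ Ψ_{R12}|, L_{R1}·|Ψ_{R12}| − (L_{R2}·|Ψ_{R22}| − (L_{T2}·|Ψ_{T22} \ Ψ_{T12}| + (L_{T2}·|Ψ_{T12}| − L_{R1}·|Ψ_{R12}|)⁺))⁺) satisfies the identity δ_{R1} = min(2·L_{R1}·|Ψ_{R11}|, d_sum − 2·L_{R2}·|Ψ_{R22}|). -/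
open MeasureTheory Set

/-! Writing `B = L_R1·|Ψ_R11 ∩ Ψ_R12| ≤ C = L_R1·|Ψ_R12|` and `max(P, C) = C + (P - C)⁺`, both sides
become `2·L_R1·|Ψ_R11 \ Ψ_R12| + 2·min(B, C - X)`, up to replacing `X` by `X⁺` in the second
argument of the minimum; this is harmless because `B ≤ C`, so for `X < 0` both minima equal `B`. -/

theorem volume_ne_top_of_subset_Icc {s : Set ℝ} {a b : ℝ} (hs : s ⊆ Icc a b) : volume s ≠ ⊤ :=
  measure_ne_top_of_subset hs (by simp [Real.volume_Icc])

theorem μr_sdiff_add_inter_s3 {s t : Set ℝ} (ht : MeasurableSet t) (hs : volume s ≠ ⊤) :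
    μr (s \ t) + μr (s ∩ t) = μr s :=
  measureReal_sdiff_add_inter ht hs

theorem μr_mono {s t : Set ℝ} (h : s ⊆ t) (ht : volume t ≠ ⊤) : μr s ≤ μr t :=
  measureReal_mono h ht

theorem min_sub_max_zero_of_le {α : Type*} [AddCommGroup α] [LinearOrder α] [IsOrderedAddMonoid α]
    {b c : α} (x : α) (h : b ≤ c) : min b (c - max x 0) = min b (c - x) := by
  rcases le_total x 0 with hx | hx
  · have hcx : c ≤ c - x := (le_sub_self_iff c).mpr hx
    rw [max_eq_right hx, sub_zero, min_eq_left h, min_eq_left (h.trans hcx)]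
  · rw [max_eq_left hx]

theorem deltaR1_identity_general
    (L_R1 L_T2 L_R2 : ℝ)
    (hLR1 : 0 ≤ L_R1)
    (ΨT12 ΨT22 ΨR11 ΨR12 ΨR22 : Set ℝ)
    (hmR12 : MeasurableSet ΨR12)
    (hsR11 : ΨR11 ⊆ Icc (-1) 1)
    (hsR12 : ΨR12 ⊆ Icc (-1) 1)
    (dsum δR1 : ℝ)
    (hdsum : dsum = 2 * L_T2 * μr (ΨT22 \ ΨT12) + 2 * L_R1 * μr (ΨR11 \ ΨR12)
        + 2 * max (L_T2 * μr ΨT12) (L_R1 * μr ΨR12))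
    (hδR1 : δR1 = 2 * L_R1 * μr (ΨR11 \ ΨR12)
        + 2 * min (L_R1 * μr (ΨR11 ∩ ΨR12))
            (L_R1 * μr ΨR12 - max (L_R2 * μr ΨR22
              - (L_T2 * μr (ΨT22 \ ΨT12) + max (L_T2 * μr ΨT12 - L_R1 * μr ΨR12) 0)) 0))
    :
    δR1 = min (2 * L_R1 * μr ΨR11) (dsum - 2 * L_R2 * μr ΨR22) := by
  have hsplit := μr_sdiff_add_inter_s3 hmR12 (volume_ne_top_of_subset_Icc hsR11)
  have hBC : L_R1 * μr (ΨR11 ∩ ΨR12) ≤ L_R1 * μr ΨR12 :=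
    mul_le_mul_of_nonneg_left (μr_mono inter_subset_right (volume_ne_top_of_subset_Icc hsR12)) hLR1
  have hmax : max (L_T2 * μr ΨT12) (L_R1 * μr ΨR12)
      = L_R1 * μr ΨR12 + max (L_T2 * μr ΨT12 - L_R1 * μr ΨR12) 0 := by
    rw [← max_add_add_left, add_sub_cancel, add_zero, max_comm]
  rw [hδR1, hdsum, min_sub_max_zero_of_le _ hBC, ← hsplit, hmax, mul_min_of_nonneg _ _ zero_le_two,
    ← min_add_add_left]
  congr 1 <;> ring

theorem deltaR1_identity
    (L_T1 L_R1 L_T2 L_R2 : ℝ)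
    (hLT1 : 0 ≤ L_T1) (hLR1 : 0 ≤ L_R1) (hLT2 : 0 ≤ L_T2) (hLR2 : 0 ≤ L_R2)
    (ΨT11 ΨT12 ΨT22 ΨR11 ΨR12 ΨR22 : Set ℝ)
    (hmT11 : MeasurableSet ΨT11) (hmT12 : MeasurableSet ΨT12)
    (hmT22 : MeasurableSet ΨT22) (hmR11 : MeasurableSet ΨR11)
    (hmR12 : MeasurableSet ΨR12) (hmR22 : MeasurableSet ΨR22)
    (hsT11 : ΨT11 ⊆ Icc (-1) 1) (hsT12 : ΨT12 ⊆ Icc (-1) 1)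
    (hsT22 : ΨT22 ⊆ Icc (-1) 1) (hsR11 : ΨR11 ⊆ Icc (-1) 1)
    (hsR12 : ΨR12 ⊆ Icc (-1) 1) (hsR22 : ΨR22 ⊆ Icc (-1) 1)
    (dsum δR1 : ℝ)
    (hdsum : dsum = 2 * L_T2 * μr (ΨT22 \ ΨT12) + 2 * L_R1 * μr (ΨR11 \ ΨR12)
        + 2 * max (L_T2 * μr ΨT12) (L_R1 * μr ΨR12))
    (hδR1 : δR1 = 2 * L_R1 * μr (ΨR11 \ ΨR12)
        + 2 * min (L_R1 * μr (ΨR11 ∩ ΨR12))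
            (L_R1 * μr ΨR12 - max (L_R2 * μr ΨR22
              - (L_T2 * μr (ΨT22 \ ΨT12) + max (L_T2 * μr ΨT12 - L_R1 * μr ΨR12) 0)) 0))
    :
    δR1 = min (2 * L_R1 * μr ΨR11) (dsum - 2 * L_R2 * μr ΨR22) :=
  deltaR1_identity_general L_R1 L_T2 L_R2 hLR1 ΨT12 ΨT22 ΨR11 ΨR12 ΨR22 hmR12 hsR11 hsR12 dsum δR1
    hdsum hδR1
end
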